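/- Let k be a field, Q a finite acyclic quiver, and X, X' finitely generated kQ-modules. With η as the construction sending X (with minimal projective resolution 0 → P^{-1} →^d P^0 → X → 0) to the kQ[ε]-module P^{-1} ⊕ P^0 with ε = (0, d), there is an isomorphism of k-vector spaces: the stable Hom-space Hom_{kQ[ε]}(η(X), η(X')) modulo maps factoring through projective kQ[ε]-modules is isomorphic to Hom_{kQ}(X, X') ⊕ Ext¹_{kQ}(X, X'). -/

import Mathlib

/-!
STATEMENT 16: Let `k` be a field, `Q` a finite acyclic quiver, `X, X'` finitely
generated `kQ`-modules with minimal projective resolutions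
`0 → P⁻¹ →^d P⁰ → X → 0` and `0 → P'⁻¹ →^{d'} P'⁰ → X' → 0`, and let
`η(X) = P⁻¹ ⊕ P⁰` with `ε(p₋₁, p₀) = (0, d p₋₁)` (similarly `η(X')`).  Then
there is an isomorphism of `k`-vector spaces
`Hom_{kQ[ε]}(η(X), η(X'))/(maps factoring through projectives)
  ≅ Hom_{kQ}(X, X') ⊕ Ext¹_{kQ}(X, X')`.

Mathlib has no path algebras, so `kQ` is represented by a finite-dimensional
hereditary `k`-algebra `R`.  `kQ[ε]`-modules are `R`-modules with a square-zero
`R`-endomorphism; morphisms are commuting `R`-linear maps; since `η(X)` is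
finitely generated, factoring through a projective `kQ[ε]`-module is the same
as factoring through some finite free module `A^n`, `A = R[ε] = R × Rε` with
`ε·(a,b) = (0,a)`.  `Ext¹_{kQ}(X, X')` is computed from the given projective
resolution of `X` as `Hom(P⁻¹, X') / Im (Hom(P⁰, X') → Hom(P⁻¹, X'))`, and
minimality is expressed by the image of the differential being superfluous.
-/

section

variable {R : Type*} [Ring R]

/-- The square-zero endomorphism `(p₋₁, p₀) ↦ (0, d p₋₁)` of `P⁻¹ ⊕ P⁰`
defining `η(X)`. -/
def εeta {P₁ P₀ : Type*} [AddCommGroup P₁] [Module R P₁]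
    [AddCommGroup P₀] [Module R P₀] (d : P₁ →ₗ[R] P₀) :
    (P₁ × P₀) →ₗ[R] (P₁ × P₀) :=
  LinearMap.prod 0 (d.comp (LinearMap.fst R P₁ P₀))

/-- `ε` acting on the free module `A^n`, `A = R[ε] = R × Rε`. -/
def εfree (R : Type*) [Ring R] (n : ℕ) :
    (Fin n → R × R) →ₗ[R] (Fin n → R × R) :=
  LinearMap.pi fun j =>
    (LinearMap.prod 0 (LinearMap.fst R R R)).comp (LinearMap.proj j)

/-- A morphism of `R[ε]`-modules factors through a (finitely generated free,
equivalently, since its source is finitely generated, any projective)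
`R[ε]`-module. -/
def FactorsThroughProj {Y Y' : Type*} [AddCommGroup Y] [Module R Y]
    [AddCommGroup Y'] [Module R Y'] (ε : Y →ₗ[R] Y) (ε' : Y' →ₗ[R] Y')
    (f : Y →ₗ[R] Y') : Prop :=
  ∃ (n : ℕ) (u : Y →ₗ[R] (Fin n → R × R)) (v : (Fin n → R × R) →ₗ[R] Y'),
    u.comp ε = (εfree R n).comp u ∧ v.comp (εfree R n) = ε'.comp v ∧
    v.comp u = f

end

section

variable (k : Type*) [Field k] (R : Type*) [Ring R] [Algebra k R]
  {Y Y' : Type*} [AddCommGroup Y] [Module R Y] [Module k Y] [IsScalarTower k R Y]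
  [AddCommGroup Y'] [Module R Y'] [Module k Y'] [IsScalarTower k R Y']

/-- The `k`-subspace of `Hom_R(Y, Y')` of maps commuting with the `ε`'s,
i.e. `Hom_{R[ε]}((Y,ε), (Y',ε'))`. -/
def commSub (ε : Y →ₗ[R] Y) (ε' : Y' →ₗ[R] Y') : Submodule k (Y →ₗ[R] Y') where
  carrier := {f | f.comp ε = ε'.comp f}
  add_mem' := by
    intro f g hf hg
    simp only [Set.mem_setOf_eq, LinearMap.add_comp, LinearMap.comp_add] at *
    rw [hf, hg]
  zero_mem' := by simp
  smul_mem' := by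
    intro c f hf
    simp only [Set.mem_setOf_eq, LinearMap.smul_comp, LinearMap.comp_smul] at *
    rw [hf]

variable {R} in
/-- The stable Hom space: `Hom_{R[ε]}` modulo maps factoring through
projective `R[ε]`-modules. -/
def StableHom (ε : Y →ₗ[R] Y) (ε' : Y' →ₗ[R] Y') : Type _ :=
  ↥(commSub k R ε ε') ⧸ Submodule.span k
    {f : ↥(commSub k R ε ε') | FactorsThroughProj ε ε' (f : Y →ₗ[R] Y')}

variable {R} in
noncomputable instance (ε : Y →ₗ[R] Y) (ε' : Y' →ₗ[R] Y') :
    AddCommGroup (StableHom k ε ε') :=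
  inferInstanceAs (AddCommGroup (↥(commSub k R ε ε') ⧸ Submodule.span k
    {f : ↥(commSub k R ε ε') | FactorsThroughProj ε ε' (f : Y →ₗ[R] Y')}))

variable {R} in
noncomputable instance (ε : Y →ₗ[R] Y) (ε' : Y' →ₗ[R] Y') :
    Module k (StableHom k ε ε') :=
  inferInstanceAs (Module k (↥(commSub k R ε ε') ⧸ Submodule.span k
    {f : ↥(commSub k R ε ε') | FactorsThroughProj ε ε' (f : Y →ₗ[R] Y')}))

end

/-!
Over `R[ε]` the map `a + bε ↦ b` is a contracting homotopy of the free modules, so a morphism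
factoring through `R[ε]^n` is null-homotopic, `f = ε' a + a ε`; conversely, when the source is a
finitely generated projective `R`-module, every null-homotopic morphism factors through some
`R[ε]^n`.

A morphism `η(X) → η(X')` is a lower triangular matrix `(A, C, E)` with `E d = d' A`. Sending it
to the map `X → X'` induced by `E` together with the class of `π' C` in `Ext¹(X, X')` is onto,
by lifting along `π'` out of the projectives `P⁰` and `P⁻¹`. Its kernel consists exactly of the
null-homotopic matrices `(s d, d' r + t d, d' s)`: `π' E = 0` forces `E = d' s`, and writing
`π' C = t₀ d` and lifting `t₀` to `t` forces `C - t d = d' r`.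
-/

section Homotopy

variable {R Y Y' : Type*} [Ring R] [AddCommGroup Y] [Module R Y] [AddCommGroup Y'] [Module R Y']

def freeContraction (R : Type*) [Ring R] (n : ℕ) :
    (Fin n → R × R) →ₗ[R] (Fin n → R × R) :=
  LinearMap.pi fun j => LinearMap.inl R R R ∘ₗ LinearMap.snd R R R ∘ₗ LinearMap.proj j

lemma εfree_comp_freeContraction_add (n : ℕ) :
    εfree R n ∘ₗ freeContraction R n + freeContraction R n ∘ₗ εfree R n = LinearMap.id := by
  refine LinearMap.ext fun w => funext fun j => ?_
  simp [εfree, freeContraction]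

theorem FactorsThroughProj.exists_homotopy {ε : Y →ₗ[R] Y} {ε' : Y' →ₗ[R] Y'}
    {f : Y →ₗ[R] Y'} (hf : FactorsThroughProj ε ε' f) :
    ∃ a : Y →ₗ[R] Y', f = ε' ∘ₗ a + a ∘ₗ ε := by
  obtain ⟨n, u, v, hu, hv, rfl⟩ := hf
  refine ⟨v ∘ₗ freeContraction R n ∘ₗ u, ?_⟩
  calc v ∘ₗ u
        = v ∘ₗ (εfree R n ∘ₗ freeContraction R n + freeContraction R n ∘ₗ εfree R n) ∘ₗ u := by
        rw [εfree_comp_freeContraction_add, LinearMap.id_comp]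
    _ = ε' ∘ₗ (v ∘ₗ freeContraction R n ∘ₗ u) + (v ∘ₗ freeContraction R n ∘ₗ u) ∘ₗ ε := by
        simp only [LinearMap.add_comp, LinearMap.comp_add, LinearMap.comp_assoc, hu]
        rw [← LinearMap.comp_assoc, hv, LinearMap.comp_assoc]

theorem factorsThroughProj_comp_add_comp [Module.Finite R Y] [Module.Projective R Y]
    {ε : Y →ₗ[R] Y} {ε' : Y' →ₗ[R] Y'} (hε : ε ∘ₗ ε = 0) (hε' : ε' ∘ₗ ε' = 0)
    (a : Y →ₗ[R] Y') : FactorsThroughProj ε ε' (ε' ∘ₗ a + a ∘ₗ ε) := by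
  obtain ⟨n, q, hq⟩ := Module.Finite.exists_fin' R Y
  obtain ⟨i, hqi⟩ := Module.projective_lifting_property q LinearMap.id hq
  have hqi' (y : Y) : q (i y) = y := LinearMap.congr_fun hqi y
  have hε₀ (y : Y) : ε (ε y) = 0 := LinearMap.congr_fun hε y
  have hε₀' (y : Y') : ε' (ε' y) = 0 := LinearMap.congr_fun hε' y
  refine ⟨n, LinearMap.pi fun j => (LinearMap.proj j ∘ₗ i ∘ₗ ε).prod (LinearMap.proj j ∘ₗ i),
    a ∘ₗ q ∘ₗ (LinearMap.pi fun j => LinearMap.fst R R R ∘ₗ LinearMap.proj j) +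
      ε' ∘ₗ a ∘ₗ q ∘ₗ (LinearMap.pi fun j => LinearMap.snd R R R ∘ₗ LinearMap.proj j),
    ?_, ?_, ?_⟩
  · ext y j <;> simp [εfree, hε₀]
  · refine LinearMap.ext fun w => ?_
    change a (q 0) + ε' (a (q fun j => (w j).1)) =
      ε' (a (q fun j => (w j).1) + ε' (a (q fun j => (w j).2)))
    simp [hε₀']
  · refine LinearMap.ext fun y => ?_
    change a (q (i (ε y))) + ε' (a (q (i y))) = _
    simp [hqi', add_comm]

theorem factorsThroughProj_iff_exists_homotopy [Module.Finite R Y] [Module.Projective R Y]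
    {ε : Y →ₗ[R] Y} {ε' : Y' →ₗ[R] Y'} (hε : ε ∘ₗ ε = 0) (hε' : ε' ∘ₗ ε' = 0)
    {f : Y →ₗ[R] Y'} : FactorsThroughProj ε ε' f ↔ ∃ a : Y →ₗ[R] Y', f = ε' ∘ₗ a + a ∘ₗ ε :=
  ⟨FactorsThroughProj.exists_homotopy,
    by rintro ⟨a, rfl⟩; exact factorsThroughProj_comp_add_comp hε hε' a⟩

end Homotopy

namespace Function.Exact

variable {R M N P L : Type*} [Ring R] [AddCommGroup M] [Module R M] [AddCommGroup N] [Module R N]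
  [AddCommGroup P] [Module R P] [AddCommGroup L] [Module R L] {d : M →ₗ[R] N} {π : N →ₗ[R] P}

noncomputable def desc (h : Exact d π) (hπ : Surjective π) (g : N →ₗ[R] L) (hg : g ∘ₗ d = 0) :
    P →ₗ[R] L :=
  (LinearMap.range d).liftQ g (LinearMap.range_le_ker_iff.mpr hg) ∘ₗ
    (h.linearEquivOfSurjective hπ).symm.toLinearMap

@[simp]
lemma desc_apply (h : Exact d π) (hπ : Surjective π) (g : N →ₗ[R] L) (hg : g ∘ₗ d = 0) (x : N) :
    h.desc hπ g hg (π x) = g x := by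
  simp [desc]

lemma exists_comp_eq (h : Exact d π) (hd : Injective d) {g : L →ₗ[R] N} (hg : π ∘ₗ g = 0) :
    ∃ s : L →ₗ[R] M, d ∘ₗ s = g := by
  have hrange (x : L) : g x ∈ LinearMap.range d :=
    h.linearMap_ker_eq ▸ LinearMap.congr_fun hg x
  refine ⟨(LinearEquiv.ofInjective d hd).symm ∘ₗ g.codRestrict _ hrange, LinearMap.ext fun x => ?_⟩
  simp

end Function.Exact

section Blocks

variable {R P₁ P₀ P₁' P₀' : Type*} [Ring R]
  [AddCommGroup P₁] [Module R P₁] [AddCommGroup P₀] [Module R P₀]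
  [AddCommGroup P₁'] [Module R P₁'] [AddCommGroup P₀'] [Module R P₀']

-- The entries of `f : P⁻¹ ⊕ P⁰ → P'⁻¹ ⊕ P'⁰` as a `2 × 2` matrix, indexed (target, source),
-- with `1` standing for `P⁻¹` and `0` for `P⁰`.

def block₁₁ (f : (P₁ × P₀) →ₗ[R] (P₁' × P₀')) : P₁ →ₗ[R] P₁' :=
  LinearMap.fst R P₁' P₀' ∘ₗ f ∘ₗ LinearMap.inl R P₁ P₀

def block₁₀ (f : (P₁ × P₀) →ₗ[R] (P₁' × P₀')) : P₀ →ₗ[R] P₁' :=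
  LinearMap.fst R P₁' P₀' ∘ₗ f ∘ₗ LinearMap.inr R P₁ P₀

def block₀₁ (f : (P₁ × P₀) →ₗ[R] (P₁' × P₀')) : P₁ →ₗ[R] P₀' :=
  LinearMap.snd R P₁' P₀' ∘ₗ f ∘ₗ LinearMap.inl R P₁ P₀

def block₀₀ (f : (P₁ × P₀) →ₗ[R] (P₁' × P₀')) : P₀ →ₗ[R] P₀' :=
  LinearMap.snd R P₁' P₀' ∘ₗ f ∘ₗ LinearMap.inr R P₁ P₀

@[simp] lemma block₁₁_apply (f : (P₁ × P₀) →ₗ[R] (P₁' × P₀')) (p : P₁) :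
    block₁₁ f p = (f (p, 0)).1 := rfl

@[simp] lemma block₁₀_apply (f : (P₁ × P₀) →ₗ[R] (P₁' × P₀')) (p : P₀) :
    block₁₀ f p = (f (0, p)).1 := rfl

@[simp] lemma block₀₁_apply (f : (P₁ × P₀) →ₗ[R] (P₁' × P₀')) (p : P₁) :
    block₀₁ f p = (f (p, 0)).2 := rfl

@[simp] lemma block₀₀_apply (f : (P₁ × P₀) →ₗ[R] (P₁' × P₀')) (p : P₀) :
    block₀₀ f p = (f (0, p)).2 := rfl

def lowerBlockMap (A : P₁ →ₗ[R] P₁') (C : P₁ →ₗ[R] P₀') (E : P₀ →ₗ[R] P₀') :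
    (P₁ × P₀) →ₗ[R] (P₁' × P₀') :=
  (A ∘ₗ LinearMap.fst R P₁ P₀).prod (C ∘ₗ LinearMap.fst R P₁ P₀ + E ∘ₗ LinearMap.snd R P₁ P₀)

@[simp] lemma lowerBlockMap_apply (A : P₁ →ₗ[R] P₁') (C : P₁ →ₗ[R] P₀') (E : P₀ →ₗ[R] P₀')
    (p : P₁ × P₀) : lowerBlockMap A C E p = (A p.1, C p.1 + E p.2) := rfl

@[simp] lemma εeta_apply (d : P₁ →ₗ[R] P₀) (p : P₁ × P₀) : εeta d p = (0, d p.1) := rfl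

@[simp] lemma block₀₁_lowerBlockMap (A : P₁ →ₗ[R] P₁') (C : P₁ →ₗ[R] P₀') (E : P₀ →ₗ[R] P₀') :
    block₀₁ (lowerBlockMap A C E) = C := by
  ext; simp

@[simp] lemma block₀₀_lowerBlockMap (A : P₁ →ₗ[R] P₁') (C : P₁ →ₗ[R] P₀') (E : P₀ →ₗ[R] P₀') :
    block₀₀ (lowerBlockMap A C E) = E := by
  ext; simp

lemma εeta_comp_εeta (d : P₁ →ₗ[R] P₀) : εeta d ∘ₗ εeta d = 0 := by
  ext <;> simp

variable {d : P₁ →ₗ[R] P₀} {d' : P₁' →ₗ[R] P₀'}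

lemma lowerBlockMap_comp_εeta {A : P₁ →ₗ[R] P₁'} {E : P₀ →ₗ[R] P₀'} (C : P₁ →ₗ[R] P₀')
    (h : E ∘ₗ d = d' ∘ₗ A) :
    lowerBlockMap A C E ∘ₗ εeta d = εeta d' ∘ₗ lowerBlockMap A C E := by
  have h' (p : P₁) : E (d p) = d' (A p) := LinearMap.congr_fun h p
  ext p <;> simp [h']

lemma block₀₀_comp_of_comp_εeta {f : (P₁ × P₀) →ₗ[R] (P₁' × P₀')}
    (hf : f ∘ₗ εeta d = εeta d' ∘ₗ f) : block₀₀ f ∘ₗ d = d' ∘ₗ block₁₁ f := by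
  ext p
  simpa using congr_arg Prod.snd (LinearMap.congr_fun hf (p, 0))

lemma eq_lowerBlockMap_of_comp_εeta (hd' : Function.Injective d')
    {f : (P₁ × P₀) →ₗ[R] (P₁' × P₀')} (hf : f ∘ₗ εeta d = εeta d' ∘ₗ f) :
    f = lowerBlockMap (block₁₁ f) (block₀₁ f) (block₀₀ f) := by
  have hB (p : P₀) : (f (0, p)).1 = 0 := hd' <| by
    simpa [Prod.mk_zero_zero] using (congr_arg Prod.snd (LinearMap.congr_fun hf (0, p))).symm
  ext p <;> simp [hB, Prod.mk_zero_zero]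

lemma εeta_comp_add_comp_εeta (a : (P₁ × P₀) →ₗ[R] (P₁' × P₀')) :
    εeta d' ∘ₗ a + a ∘ₗ εeta d =
      lowerBlockMap (block₁₀ a ∘ₗ d) (d' ∘ₗ block₁₁ a + block₀₀ a ∘ₗ d) (d' ∘ₗ block₁₀ a) := by
  ext p <;> simp [add_comm, Prod.mk_zero_zero]

lemma comp_block₀₀_comp_eq_zero {X' : Type*} [AddCommGroup X'] [Module R X'] {π' : P₀' →ₗ[R] X'}
    (hexact' : Function.Exact d' π') {f : (P₁ × P₀) →ₗ[R] (P₁' × P₀')}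
    (hf : f ∘ₗ εeta d = εeta d' ∘ₗ f) : (π' ∘ₗ block₀₀ f) ∘ₗ d = 0 := by
  rw [LinearMap.comp_assoc, block₀₀_comp_of_comp_εeta hf, ← LinearMap.comp_assoc,
    hexact'.linearMap_comp_eq_zero, LinearMap.zero_comp]

end Blocks

section HomExt

variable (k : Type*) [Field k] {R : Type*} [Ring R] [Algebra k R]
  {X X' P₁ P₀ P₁' P₀' : Type*} [AddCommGroup X] [Module R X]
  [AddCommGroup X'] [Module R X'] [Module k X'] [IsScalarTower k R X']
  [AddCommGroup P₁] [Module R P₁] [AddCommGroup P₀] [Module R P₀]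
  [AddCommGroup P₁'] [Module R P₁'] [Module k P₁'] [IsScalarTower k R P₁']
  [AddCommGroup P₀'] [Module R P₀'] [Module k P₀'] [IsScalarTower k R P₀']
  {d : P₁ →ₗ[R] P₀} {π : P₀ →ₗ[R] X} {d' : P₁' →ₗ[R] P₀'} {π' : P₀' →ₗ[R] X'}

noncomputable def etaHomToHom (hexact : Function.Exact d π) (hπ : Function.Surjective π)
    (hexact' : Function.Exact d' π') :
    commSub k R (εeta d) (εeta d') →ₗ[k] (X →ₗ[R] X') where
  toFun f := hexact.desc hπ (π' ∘ₗ block₀₀ f.1) (comp_block₀₀_comp_eq_zero hexact' f.2)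
  map_add' f g := (LinearMap.cancel_right hπ).1 (by ext; simp)
  map_smul' c f := (LinearMap.cancel_right hπ).1 (by ext; simp)

variable (π') in
def etaHomToExt (dstar : (P₀ →ₗ[R] X') →ₗ[k] (P₁ →ₗ[R] X')) :
    commSub k R (εeta d) (εeta d') →ₗ[k] ((P₁ →ₗ[R] X') ⧸ LinearMap.range dstar) :=
  (LinearMap.range dstar).mkQ ∘ₗ
    { toFun f := π' ∘ₗ block₀₁ f.1
      map_add' f g := by ext; simp
      map_smul' c f := by ext; simp }

noncomputable def etaHomToHomExt (hexact : Function.Exact d π) (hπ : Function.Surjective π)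
    (hexact' : Function.Exact d' π') (dstar : (P₀ →ₗ[R] X') →ₗ[k] (P₁ →ₗ[R] X')) :
    commSub k R (εeta d) (εeta d') →ₗ[k]
      (X →ₗ[R] X') × ((P₁ →ₗ[R] X') ⧸ LinearMap.range dstar) :=
  (etaHomToHom k hexact hπ hexact').prod (etaHomToExt k π' dstar)

@[simp] lemma etaHomToHom_apply_apply (hexact : Function.Exact d π) (hπ : Function.Surjective π)
    (hexact' : Function.Exact d' π') (f : commSub k R (εeta d) (εeta d')) (x : P₀) :
    etaHomToHom k hexact hπ hexact' f (π x) = π' (block₀₀ f.1 x) :=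
  hexact.desc_apply hπ _ (comp_block₀₀_comp_eq_zero hexact' f.2) x

lemma etaHomToHomExt_surjective [Module.Projective R P₁] [Module.Projective R P₀]
    (hexact : Function.Exact d π) (hπ : Function.Surjective π)
    (hexact' : Function.Exact d' π') (hd' : Function.Injective d') (hπ' : Function.Surjective π')
    (dstar : (P₀ →ₗ[R] X') →ₗ[k] (P₁ →ₗ[R] X')) :
    Function.Surjective (etaHomToHomExt k hexact hπ hexact' dstar) := by
  rintro ⟨g, ξ⟩
  obtain ⟨h, rfl⟩ := Submodule.Quotient.mk_surjective _ ξ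
  obtain ⟨E, hE⟩ := Module.projective_lifting_property π' (g ∘ₗ π) hπ'
  obtain ⟨A, hA⟩ : ∃ A, d' ∘ₗ A = E ∘ₗ d := hexact'.exists_comp_eq hd' <| by
    rw [← LinearMap.comp_assoc, hE, LinearMap.comp_assoc, hexact.linearMap_comp_eq_zero,
      LinearMap.comp_zero]
  obtain ⟨C, hC⟩ := Module.projective_lifting_property π' h hπ'
  refine ⟨⟨lowerBlockMap A C E, lowerBlockMap_comp_εeta C hA.symm⟩, Prod.ext ?_ ?_⟩
  · refine (LinearMap.cancel_right hπ).1 (LinearMap.ext fun x => ?_)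
    simpa [etaHomToHomExt] using LinearMap.congr_fun hE x
  · simp [etaHomToHomExt, etaHomToExt, hC]

lemma etaHomToHomExt_eq_zero_of_homotopy (hexact : Function.Exact d π)
    (hπ : Function.Surjective π) (hexact' : Function.Exact d' π')
    (dstar : (P₀ →ₗ[R] X') →ₗ[k] (P₁ →ₗ[R] X')) (hdstar : ∀ h, dstar h = h ∘ₗ d)
    (f : commSub k R (εeta d) (εeta d')) {a : (P₁ × P₀) →ₗ[R] (P₁' × P₀')}
    (ha : f.1 = εeta d' ∘ₗ a + a ∘ₗ εeta d) : etaHomToHomExt k hexact hπ hexact' dstar f = 0 := by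
  rw [εeta_comp_add_comp_εeta] at ha
  refine Prod.ext ((LinearMap.cancel_right hπ).1 (LinearMap.ext fun x => ?_)) ?_
  · simp [etaHomToHomExt, ha, hexact'.apply_apply_eq_zero]
  · refine (Submodule.Quotient.mk_eq_zero _).2 ⟨π' ∘ₗ block₀₀ a, ?_⟩
    ext x
    simp [hdstar, ha, hexact'.apply_apply_eq_zero]

lemma exists_homotopy_of_etaHomToHomExt_eq_zero [Module.Projective R P₀]
    (hexact : Function.Exact d π) (hπ : Function.Surjective π)
    (hexact' : Function.Exact d' π') (hd' : Function.Injective d') (hπ' : Function.Surjective π')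
    (dstar : (P₀ →ₗ[R] X') →ₗ[k] (P₁ →ₗ[R] X')) (hdstar : ∀ h, dstar h = h ∘ₗ d)
    (f : commSub k R (εeta d) (εeta d')) (hf : etaHomToHomExt k hexact hπ hexact' dstar f = 0) :
    ∃ a : (P₁ × P₀) →ₗ[R] (P₁' × P₀'), f.1 = εeta d' ∘ₗ a + a ∘ₗ εeta d := by
  obtain ⟨s, hs⟩ : ∃ s, d' ∘ₗ s = block₀₀ f.1 := hexact'.exists_comp_eq hd' <|
    LinearMap.ext fun x => by
      simpa [etaHomToHomExt] using LinearMap.congr_fun (congr_arg Prod.fst hf) (π x)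
  have hA : block₁₁ f.1 = s ∘ₗ d := (LinearMap.cancel_left hd').1 <| by
    rw [← block₀₀_comp_of_comp_εeta f.2, ← hs, LinearMap.comp_assoc]
  obtain ⟨t₀, ht₀⟩ : π' ∘ₗ block₀₁ f.1 ∈ LinearMap.range dstar :=
    (Submodule.Quotient.mk_eq_zero _).1 (congr_arg Prod.snd hf)
  obtain ⟨t, ht⟩ := Module.projective_lifting_property π' t₀ hπ'
  obtain ⟨r, hr⟩ : ∃ r, d' ∘ₗ r = block₀₁ f.1 - t ∘ₗ d := hexact'.exists_comp_eq hd' <| by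
    rw [LinearMap.comp_sub, ← LinearMap.comp_assoc, ht, ← hdstar, ht₀, sub_self]
  refine ⟨(r ∘ₗ LinearMap.fst R P₁ P₀ + s ∘ₗ LinearMap.snd R P₁ P₀).prod
    (t ∘ₗ LinearMap.snd R P₁ P₀), ?_⟩
  rw [εeta_comp_add_comp_εeta, eq_lowerBlockMap_of_comp_εeta hd' f.2, ← hs, hA,
    eq_add_of_sub_eq hr.symm]
  congr 1 <;> ext <;> simp

lemma etaHomToHomExt_eq_zero_iff [Module.Finite R P₁] [Module.Projective R P₁]
    [Module.Finite R P₀] [Module.Projective R P₀]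
    (hexact : Function.Exact d π) (hπ : Function.Surjective π)
    (hexact' : Function.Exact d' π') (hd' : Function.Injective d') (hπ' : Function.Surjective π')
    (dstar : (P₀ →ₗ[R] X') →ₗ[k] (P₁ →ₗ[R] X')) (hdstar : ∀ h, dstar h = h ∘ₗ d)
    (f : commSub k R (εeta d) (εeta d')) :
    etaHomToHomExt k hexact hπ hexact' dstar f = 0 ↔
      FactorsThroughProj (εeta d) (εeta d') f.1 := by
  rw [factorsThroughProj_iff_exists_homotopy (εeta_comp_εeta d) (εeta_comp_εeta d')]
  exact ⟨exists_homotopy_of_etaHomToHomExt_eq_zero k hexact hπ hexact' hd' hπ' dstar hdstar f,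
    fun ⟨_, ha⟩ => etaHomToHomExt_eq_zero_of_homotopy k hexact hπ hexact' dstar hdstar f ha⟩

end HomExt

theorem stmt16_general (k : Type*) [Field k] (R : Type*) [Ring R] [Algebra k R]
    -- the two modules and their minimal projective resolutions
    (X X' : Type*) [AddCommGroup X] [Module R X]
    [AddCommGroup X'] [Module R X'] [Module k X'] [IsScalarTower k R X']
    (P₁ P₀ P₁' P₀' : Type*)
    [AddCommGroup P₁] [Module R P₁]
    [AddCommGroup P₀] [Module R P₀]
    [AddCommGroup P₁'] [Module R P₁'] [Module k P₁'] [IsScalarTower k R P₁']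
    [AddCommGroup P₀'] [Module R P₀'] [Module k P₀'] [IsScalarTower k R P₀']
    [Module.Finite R P₁] [Module.Projective R P₁]
    [Module.Finite R P₀] [Module.Projective R P₀]
    (d : P₁ →ₗ[R] P₀) (π : P₀ →ₗ[R] X)
    (hπ : Function.Surjective π)
    (hexact : LinearMap.range d = LinearMap.ker π)
    (d' : P₁' →ₗ[R] P₀') (π' : P₀' →ₗ[R] X')
    (hd' : Function.Injective d') (hπ' : Function.Surjective π')
    (hexact' : LinearMap.range d' = LinearMap.ker π')
    -- `Hom(P⁰, X') → Hom(P⁻¹, X')`, whose cokernel computes `Ext¹(X, X')`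
    (dstar : (P₀ →ₗ[R] X') →ₗ[k] (P₁ →ₗ[R] X'))
    (hdstar : ∀ h : P₀ →ₗ[R] X', dstar h = h.comp d) :
    -- the stable Hom-space of `(η(X), η(X'))` is `k`-linearly isomorphic to
    -- `Hom_R(X,X') ⊕ Ext¹_R(X,X')`
    Nonempty ((StableHom k (εeta d) (εeta d'))
      ≃ₗ[k] ((X →ₗ[R] X') × ((P₁ →ₗ[R] X') ⧸ LinearMap.range dstar))) := by
  have hdπ : Function.Exact d π := LinearMap.exact_iff.mpr hexact.symm
  have hdπ' : Function.Exact d' π' := LinearMap.exact_iff.mpr hexact'.symm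
  set Φ := etaHomToHomExt k hdπ hπ hdπ' dstar
  have hker : Submodule.span k
      {f : commSub k R (εeta d) (εeta d') | FactorsThroughProj (εeta d) (εeta d') f.1} =
      LinearMap.ker Φ := by
    convert Submodule.span_eq (LinearMap.ker Φ) using 2
    ext f
    exact (etaHomToHomExt_eq_zero_iff k hdπ hπ hdπ' hd' hπ' dstar hdstar f).symm
  exact ⟨(Submodule.quotEquivOfEq _ _ hker).trans
    (Φ.quotKerEquivOfSurjective (etaHomToHomExt_surjective k hdπ hπ hdπ' hd' hπ' dstar))⟩

theorem stmt16 (k : Type*) [Field k] (R : Type*) [Ring R] [Algebra k R]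
    [FiniteDimensional k R]
    (hhered : ∀ I : Submodule R R, Module.Projective R I)
    -- the two modules and their minimal projective resolutions
    (X X' : Type*) [AddCommGroup X] [Module R X] [Module k X] [IsScalarTower k R X]
    [AddCommGroup X'] [Module R X'] [Module k X'] [IsScalarTower k R X']
    [Module.Finite R X] [Module.Finite R X']
    (P₁ P₀ P₁' P₀' : Type*)
    [AddCommGroup P₁] [Module R P₁] [Module k P₁] [IsScalarTower k R P₁]
    [AddCommGroup P₀] [Module R P₀] [Module k P₀] [IsScalarTower k R P₀]
    [AddCommGroup P₁'] [Module R P₁'] [Module k P₁'] [IsScalarTower k R P₁']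
    [AddCommGroup P₀'] [Module R P₀'] [Module k P₀'] [IsScalarTower k R P₀']
    [Module.Finite R P₁] [Module.Projective R P₁]
    [Module.Finite R P₀] [Module.Projective R P₀]
    [Module.Finite R P₁'] [Module.Projective R P₁']
    [Module.Finite R P₀'] [Module.Projective R P₀']
    (d : P₁ →ₗ[R] P₀) (π : P₀ →ₗ[R] X)
    (hd : Function.Injective d) (hπ : Function.Surjective π)
    (hexact : LinearMap.range d = LinearMap.ker π)
    (hmin : ∀ N : Submodule R P₀, N ⊔ LinearMap.range d = ⊤ → N = ⊤)
    (d' : P₁' →ₗ[R] P₀') (π' : P₀' →ₗ[R] X')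
    (hd' : Function.Injective d') (hπ' : Function.Surjective π')
    (hexact' : LinearMap.range d' = LinearMap.ker π')
    (hmin' : ∀ N : Submodule R P₀', N ⊔ LinearMap.range d' = ⊤ → N = ⊤)
    -- `Hom(P⁰, X') → Hom(P⁻¹, X')`, whose cokernel computes `Ext¹(X, X')`
    (dstar : (P₀ →ₗ[R] X') →ₗ[k] (P₁ →ₗ[R] X'))
    (hdstar : ∀ h : P₀ →ₗ[R] X', dstar h = h.comp d) :
    -- the stable Hom-space of `(η(X), η(X'))` is `k`-linearly isomorphic to
    -- `Hom_R(X,X') ⊕ Ext¹_R(X,X')`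
    Nonempty ((StableHom k (εeta d) (εeta d'))
      ≃ₗ[k] ((X →ₗ[R] X') × ((P₁ →ₗ[R] X') ⧸ LinearMap.range dstar))) :=
  stmt16_general k R X X' P₁ P₀ P₁' P₀' d π hπ hexact d' π' hd' hπ' hexact' dstar hdstar
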